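/- Let M be the union of nontrivial graph matroid families M₁, …, M_k, where M_i has dimensionality d_i and threshold t_i, and set t = Σ_{i=1}^{k} max(t_i, 2d_i). Then: (a) if a graph G contains pairwise edge-disjoint spanning subgraphs G₁, …, G_k such that G_i is M_i-rigid for each i, then G is M-rigid; (b) conversely, if G is M-rigid and has at least t vertices, then G contains pairwise edge-disjoint spanning subgraphs G₁, …, G_k such that G_i is M_i-rigid for each i. -/

import Mathlib

/-!
Common framework: graph matroid families.

A finite simple graph (without isolated vertices) is identified with its edge
set: a finite set of non-diagonal elements of `Sym2 ℕ`.  A graph matroid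
family is encoded, following the paper, as a finitary matroid on the edge set
of the countable complete graph on `ℕ` that is invariant under all
permutations of `ℕ`.
-/

/-- The set of vertices covered by a set of edges. -/
def eSupp (E : Set (Sym2 ℕ)) : Set ℕ := {v : ℕ | ∃ e ∈ E, v ∈ e}

/-- The edge set of the complete graph on the vertex set `V`. -/
def clique (V : Set ℕ) : Set (Sym2 ℕ) := {e : Sym2 ℕ | ¬ e.IsDiag ∧ ∀ v ∈ e, v ∈ V}

/-- The edge set of the complete graph `K_n` on the vertices `0, …, n-1`. -/
def cliqueN (n : ℕ) : Set (Sym2 ℕ) := clique {v : ℕ | v < n}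

/-- `E` is (the edge set of) a finite simple graph. -/
def IsGraph (E : Set (Sym2 ℕ)) : Prop := E.Finite ∧ ∀ e ∈ E, ¬ e.IsDiag

/-- The degree of the vertex `v` in the edge set `E`. -/
noncomputable def deg (E : Set (Sym2 ℕ)) (v : ℕ) : ℕ := {e ∈ E | v ∈ e}.ncard

/-- The minimum degree of (the graph with) edge set `E` (whose vertex set is `eSupp E`). -/
noncomputable def minDeg (E : Set (Sym2 ℕ)) : ℕ := sInf {k : ℕ | ∃ v ∈ eSupp E, deg E v = k}

/-- Deleting a set `S` of vertices from the graph with edge set `E`. -/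
def deleteVerts (E : Set (Sym2 ℕ)) (S : Set ℕ) : Set (Sym2 ℕ) := {e ∈ E | ∀ v ∈ e, v ∉ S}

/-- The graph with edge set `E` is `k`-connected: it has more than `k` vertices and
deleting any set of fewer than `k` vertices leaves a connected graph. -/
def KConnected (k : ℕ) (E : Set (Sym2 ℕ)) : Prop :=
  k < (eSupp E).ncard ∧
  ∀ S : Finset ℕ, S.card < k →
    ((SimpleGraph.fromEdgeSet E).induce (eSupp E \ ↑S)).Connected

/-- `E` is a forest. -/
def IsForest (E : Set (Sym2 ℕ)) : Prop := (SimpleGraph.fromEdgeSet E).IsAcyclic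

/-- `E` is a matching: no two distinct edges of `E` share a vertex. -/
def IsMatching (E : Set (Sym2 ℕ)) : Prop :=
  ∀ e ∈ E, ∀ f ∈ E, e ≠ f → ∀ v : ℕ, v ∈ e → v ∉ f

/-- `E` is a star `K_{1,m}` with `m` edges. -/
def IsStar (m : ℕ) (E : Set (Sym2 ℕ)) : Prop :=
  ∃ (c : ℕ) (L : Finset ℕ), c ∉ L ∧ L.card = m ∧ E = (fun x => s(c, x)) '' ↑L

/-- `C` is a cycle graph `C_n` for some `n ≥ 3`. -/
def IsCycleGraph (C : Set (Sym2 ℕ)) : Prop :=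
  ∃ n : ℕ, 3 ≤ n ∧ ∃ f : ZMod n → ℕ, Function.Injective f ∧
    C = {e : Sym2 ℕ | ∃ i : ZMod n, e = s(f i, f (i + 1))}

/-- The rank of the set `X` in the matroid `M₀`: the supremum of the cardinalities of
independent subsets of `X` (as a natural number; all sets we use are finite). -/
noncomputable def mrk (M₀ : Matroid (Sym2 ℕ)) (X : Set (Sym2 ℕ)) : ℕ :=
  sSup {n : ℕ | ∃ I ⊆ X, M₀.Indep I ∧ I.ncard = n}

/-- A vertical `k`-separation of the matroid `M₀`. -/
def VerticalSep (M₀ : Matroid (Sym2 ℕ)) (k : ℕ) (E₁ E₂ : Set (Sym2 ℕ)) : Prop :=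
  Disjoint E₁ E₂ ∧ E₁ ∪ E₂ = M₀.E ∧
  k ≤ mrk M₀ E₁ ∧ k ≤ mrk M₀ E₂ ∧
  mrk M₀ E₁ + mrk M₀ E₂ + 1 ≤ mrk M₀ M₀.E + k

/-- The matroid `M₀` is vertically `k`-connected. -/
def VerticallyConnected (M₀ : Matroid (Sym2 ℕ)) (k : ℕ) : Prop :=
  k ≤ mrk M₀ M₀.E ∧
  ∀ k' : ℕ, 0 < k' → k' < k → ∀ E₁ E₂ : Set (Sym2 ℕ), ¬ VerticalSep M₀ k' E₁ E₂

/-- A `d`-dimensional abstract rigidity matroid on the complete graph with vertex set `V`. -/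
def IsARM (d : ℕ) (V : Set ℕ) (M₀ : Matroid (Sym2 ℕ)) : Prop :=
  M₀.E = clique V ∧
  (∀ E₁ E₂ : Set (Sym2 ℕ), E₁ ⊆ clique V → E₂ ⊆ clique V →
      (eSupp E₁ ∩ eSupp E₂).ncard < d →
      M₀.closure (E₁ ∪ E₂) = M₀.closure E₁ ∪ M₀.closure E₂) ∧
  (∀ E₁ E₂ : Set (Sym2 ℕ), E₁ ⊆ clique V → E₂ ⊆ clique V →
      d ≤ (eSupp E₁ ∩ eSupp E₂).ncard →
      M₀.closure E₁ = clique (eSupp E₁) → M₀.closure E₂ = clique (eSupp E₂) →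
      M₀.closure (E₁ ∪ E₂) = clique (eSupp E₁ ∪ eSupp E₂))

/-- The `d`-dimensional edge split operation: replace an edge `uv` of `G` by a new
vertex `w` joined to `u` and `v`, as well as to `d - 1` other vertices of `G`. -/
def EdgeSplit (d : ℕ) (G G' : Set (Sym2 ℕ)) : Prop :=
  ∃ (u v w : ℕ) (X : Finset ℕ),
    s(u, v) ∈ G ∧ w ∉ eSupp G ∧ ↑X ⊆ eSupp G ∧ X.card = d - 1 ∧ u ∉ X ∧ v ∉ X ∧
    G' = (G \ {s(u, v)}) ∪ {s(w, u), s(w, v)} ∪ ((fun x => s(w, x)) '' ↑X)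

/-- A graph matroid family: a finitary matroid on the edge set of the countable
complete graph on `ℕ`, invariant under all permutations of `ℕ`. -/
structure GraphMatroidFamily where
  /-- The underlying matroid on the edge set of `K_ℕ`. -/
  M : Matroid (Sym2 ℕ)
  ground_eq : M.E = {e : Sym2 ℕ | ¬ e.IsDiag}
  finitary : M.Finitary
  invariant : ∀ σ : Equiv.Perm ℕ, ∀ I : Set (Sym2 ℕ),
    M.Indep I → M.Indep (Sym2.map σ '' I)

namespace GraphMatroidFamily

variable (M : GraphMatroidFamily)

/-- The rank function of the family: `M.rk E` is the rank of the matroid `M(G)` for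
any graph `G` whose edge set contains `E`. -/
noncomputable def rk (E : Set (Sym2 ℕ)) : ℕ := mrk M.M E

/-- A set of edges (a graph) is `M`-independent. -/
def Indep (E : Set (Sym2 ℕ)) : Prop := M.M.Indep E

/-- `C` is an `M`-circuit: a graph that is not `M`-independent, but such that deleting
any single edge from it yields an `M`-independent graph. -/
def IsCircuit (C : Set (Sym2 ℕ)) : Prop :=
  IsGraph C ∧ ¬ M.Indep C ∧ ∀ e ∈ C, M.Indep (C \ {e})

/-- The graph with edge set `E` is `M`-rigid. -/
def Rigid (E : Set (Sym2 ℕ)) : Prop := M.rk E = M.rk (clique (eSupp E))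

/-- The graph with vertex set `V` and edge set `E` is `M`-rigid. -/
def RigidOn (V : Set ℕ) (E : Set (Sym2 ℕ)) : Prop := M.rk E = M.rk (clique V)

/-- `M` is trivial if every (finite, simple) graph is `M`-independent. -/
def Trivial : Prop := ∀ E : Set (Sym2 ℕ), IsGraph E → M.Indep E

/-- `M` is unbounded: the sequence `r(K_n)` is unbounded. -/
def Unbounded : Prop := ∀ B : ℕ, ∃ n : ℕ, B < M.rk (cliqueN n)

/-- `M` is bounded: the sequence `r(K_n)` is bounded. -/
def Bounded : Prop := ∃ B : ℕ, ∀ n : ℕ, M.rk (cliqueN n) ≤ B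

/-- For a bounded family, `m` is the rank `r(M)` of `M`: the maximum (limit) of the
monotone sequence `r(K_n)`. -/
def HasRank (m : ℕ) : Prop :=
  (∀ n : ℕ, M.rk (cliqueN n) ≤ m) ∧ ∃ n : ℕ, M.rk (cliqueN n) = m

/-- `d` is the dimensionality of (the nontrivial family) `M`: the least `d` such that
there is an `M`-circuit with minimum degree `d + 1`. -/
def IsDimensionality (d : ℕ) : Prop :=
  IsLeast {d : ℕ | ∃ C, M.IsCircuit C ∧ minDeg C = d + 1} d

/-- `t` is the threshold of (the nontrivial family) `M` with dimensionality `d`: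
the least value of `|V(C)| - 1` over all `M`-circuits `C` with minimum degree `d + 1`. -/
def IsThreshold (d t : ℕ) : Prop :=
  IsLeast {t : ℕ | ∃ C, M.IsCircuit C ∧ minDeg C = d + 1 ∧ (eSupp C).ncard = t + 1} t

/-- `M` has the Lovász–Yemini property. -/
def LovaszYemini : Prop :=
  ∃ c : ℕ, ∀ E : Set (Sym2 ℕ), IsGraph E → KConnected c E → M.Rigid E

/-- `ψ` is an isomorphism between the matroids `M(G)` and `M(H)`. -/
def MatroidIso (G H : Set (Sym2 ℕ)) (ψ : Sym2 ℕ → Sym2 ℕ) : Prop :=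
  Set.BijOn ψ G H ∧ ∀ S ⊆ G, (M.Indep S ↔ M.Indep (ψ '' S))

/-- `G` is `M`-reconstructible: every isomorphism between `M(G)` and `M(H)` (for a graph
`H` without isolated vertices) is induced by a graph isomorphism. -/
def Reconstructible (G : Set (Sym2 ℕ)) : Prop :=
  ∀ H : Set (Sym2 ℕ), IsGraph H → ∀ ψ : Sym2 ℕ → Sym2 ℕ, M.MatroidIso G H ψ →
    ∃ φ : ℕ → ℕ, Set.BijOn φ (eSupp G) (eSupp H) ∧ ∀ e ∈ G, ψ e = Sym2.map φ e

/-- `M` has the Whitney property. -/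
def Whitney : Prop :=
  ∃ c : ℕ, ∀ E : Set (Sym2 ℕ), IsGraph E → KConnected c E → M.Reconstructible E

/-- `M` is the union of the graph matroid families `Ms`. -/
def IsUnionOf {k : ℕ} (Ms : Fin k → GraphMatroidFamily) : Prop :=
  ∀ I : Set (Sym2 ℕ),
    M.Indep I ↔ ∃ Is : Fin k → Set (Sym2 ℕ), (∀ i, (Ms i).Indep (Is i)) ∧ I = ⋃ i, Is i

/-- `M` is a family of `d`-dimensional abstract rigidity matroids. -/
def FamilyOfARM (d : ℕ) : Prop :=
  ∀ n : ℕ, d ≤ n → IsARM d {v : ℕ | v < n} (M.M.restrict (cliqueN n))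

/-- `M` is `1`-extendable: its dimensionality `d` is finite and positive, and the
`d`-dimensional edge split operation preserves `M`-independence. -/
def OneExtendable : Prop :=
  ∃ d : ℕ, 0 < d ∧ M.IsDimensionality d ∧
    ∀ G G' : Set (Sym2 ℕ), IsGraph G → M.Indep G → EdgeSplit d G G' → M.Indep G'

/-- `G` is `k`-vertex-redundantly `M`-rigid. -/
def VertexRedundantlyRigid (k : ℕ) (G : Set (Sym2 ℕ)) : Prop :=
  M.Rigid G ∧ ∀ S : Finset ℕ, ↑S ⊆ eSupp G → S.card ≤ k →
    M.RigidOn (eSupp G \ ↑S) (deleteVerts G ↑S)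

end GraphMatroidFamily

/-!
Part (a) is subadditivity of the union rank: bases of the `Gᵢ` are disjoint, so their union
is an `M`-independent subset of `G` of size `Σ rᵢ(K_V) ≥ r(K_V)`.

For (b) it suffices that `r(K_V) = Σ rᵢ(K_V)` once `|V| ≥ t`: an `M`-basis of `G`, split into
disjoint `Mᵢ`-independent parts, then has to give every part full `Mᵢ`-rank. The equality
comes from packing disjoint `Mᵢ`-bases of `K_V`. Adding a vertex `w` to a clique on at least
`tᵢ` vertices raises `rᵢ` by exactly `dᵢ`: by at least `dᵢ` because a vertex of degree `≤ dᵢ`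
lies on no circuit (circuits have minimum degree `> dᵢ`), by at most `dᵢ` because a copy of a
threshold circuit with its minimum-degree vertex placed at `w` shows that any `dᵢ` edges at
`w` span all the others. Hence a basis of `K_{Wᵢ}` together with a `dᵢ`-star from every vertex
outside `Wᵢ` into `Wᵢ` is an `Mᵢ`-basis of `K_V`. With disjoint blocks `Wᵢ` of size
`max(tᵢ, 2dᵢ)`, each star picks one of two disjoint `dᵢ`-subsets of `Wᵢ` by a parity rule
that keeps the stars of different colours edge-disjoint.
-/

open Set Function

def starEdges (w : ℕ) (T : Set ℕ) : Set (Sym2 ℕ) := (fun x => s(w, x)) '' T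

def nbrs (E : Set (Sym2 ℕ)) (v : ℕ) : Set ℕ := {x | s(v, x) ∈ E}

section Graph

variable {E : Set (Sym2 ℕ)} {V W T : Set ℕ} {a b w : ℕ}

lemma mk_mem_clique : s(a, b) ∈ clique V ↔ a ≠ b ∧ a ∈ V ∧ b ∈ V := by
  simp only [clique, mem_ofPred_eq, Sym2.mk_isDiag_iff, Sym2.forall_mem_pair]

lemma clique_mono (h : V ⊆ W) : clique V ⊆ clique W :=
  fun _ he => ⟨he.1, fun v hv => h (he.2 v hv)⟩

lemma clique_finite (hV : V.Finite) : (clique V).Finite := by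
  refine ((hV.prod hV).image fun p => s(p.1, p.2)).subset ?_
  intro e he
  induction e with
  | _ a b => exact ⟨(a, b), ⟨(mk_mem_clique.1 he).2.1, (mk_mem_clique.1 he).2.2⟩, rfl⟩

lemma eSupp_subset_of_subset_clique (h : E ⊆ clique V) : eSupp E ⊆ V := by
  rintro v ⟨e, he, hv⟩
  exact (h he).2 v hv

lemma eSupp_finite (hE : E.Finite) : (eSupp E).Finite := by
  refine (hE.biUnion fun e _ => ?_).subset fun _ ⟨e, he, hv⟩ => mem_biUnion he hv
  induction e with
  | _ a b => exact ((finite_singleton b).insert a).subset fun v hv => Sym2.mem_iff.1 hv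

lemma IsGraph.subset_clique (hE : IsGraph E) : E ⊆ clique (eSupp E) :=
  fun e he => ⟨hE.2 e he, fun _ hv => ⟨e, he, hv⟩⟩

lemma starEdges_injective (w : ℕ) : Injective fun x : ℕ => s(w, x) :=
  fun _ _ h => (Sym2.congr_right.1 h)

lemma encard_starEdges (w : ℕ) (T : Set ℕ) : (starEdges w T).encard = T.encard :=
  (starEdges_injective w).encard_image T

lemma starEdges_subset_clique (hT : T ⊆ V) (hw : w ∈ V) (hwT : w ∉ T) :
    starEdges w T ⊆ clique V := by
  rintro _ ⟨x, hx, rfl⟩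
  exact mk_mem_clique.2 ⟨fun h => hwT (h ▸ hx), hw, hT hx⟩

lemma clique_insert_subset : clique (insert w V) ⊆ clique V ∪ starEdges w V := by
  intro e he
  induction e with
  | _ a b =>
    obtain ⟨hab, ha, hb⟩ := mk_mem_clique.1 he
    rcases ha with rfl | ha
    · exact Or.inr ⟨b, hb.resolve_left (Ne.symm hab), rfl⟩
    rcases hb with rfl | hb
    · exact Or.inr ⟨a, ha, Sym2.eq_swap⟩
    · exact Or.inl (mk_mem_clique.2 ⟨hab, ha, hb⟩)

lemma IsGraph.subset_clique_union_starEdges (hE : IsGraph E) (v : ℕ) :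
    E ⊆ clique (eSupp E \ {v}) ∪ starEdges v (nbrs E v) := by
  intro e he
  by_cases hve : v ∈ e
  · obtain ⟨x, rfl⟩ := Sym2.mem_iff_exists.1 hve
    exact Or.inr ⟨x, he, rfl⟩
  · exact Or.inl ⟨hE.2 e he, fun x hx => ⟨⟨e, he, hx⟩, fun h => hve (h ▸ hx)⟩⟩

lemma image_clique_subset {σ : ℕ → ℕ} (hσ : Injective σ) (h : MapsTo σ V W) :
    Sym2.map σ '' clique V ⊆ clique W := by
  rintro _ ⟨e, he, rfl⟩
  induction e with
  | _ a b =>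
    obtain ⟨hab, ha, hb⟩ := mk_mem_clique.1 he
    rw [Sym2.map_mk]
    exact mk_mem_clique.2 ⟨hσ.ne hab, h ha, h hb⟩

lemma nbrs_subset_eSupp (E : Set (Sym2 ℕ)) (v : ℕ) : nbrs E v ⊆ eSupp E :=
  fun x hx => ⟨_, hx, Sym2.mem_mk_right v x⟩

lemma IsGraph.notMem_nbrs (hE : IsGraph E) (v : ℕ) : v ∉ nbrs E v :=
  fun h => hE.2 _ h (Sym2.mk_isDiag_iff.2 rfl)

lemma deg_eq_ncard_nbrs (E : Set (Sym2 ℕ)) (v : ℕ) : deg E v = (nbrs E v).ncard := by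
  have : {e ∈ E | v ∈ e} = starEdges v (nbrs E v) := by
    ext e
    constructor
    · rintro ⟨he, hve⟩
      obtain ⟨x, rfl⟩ := Sym2.mem_iff_exists.1 hve
      exact ⟨x, he, rfl⟩
    · rintro ⟨x, hx, rfl⟩
      exact ⟨hx, Sym2.mem_mk_left v x⟩
  rw [deg, this, starEdges, ncard_image_of_injective _ (starEdges_injective v)]

lemma exists_deg_eq_minDeg (h : (eSupp E).Nonempty) : ∃ v ∈ eSupp E, deg E v = minDeg E :=
  Nat.sInf_mem (h.image (deg E))

lemma one_le_minDeg (hE : E.Finite) (h : (eSupp E).Nonempty) : 1 ≤ minDeg E := by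
  obtain ⟨v, ⟨e, he, hve⟩, hv⟩ := exists_deg_eq_minDeg h
  rw [← hv, Nat.one_le_iff_ne_zero, deg, Ne, ncard_eq_zero (hE.subset (sep_subset _ _))]
  exact nonempty_iff_ne_empty.1 ⟨e, he, hve⟩

end Graph

lemma mrk_eq_eRk (M₀ : Matroid (Sym2 ℕ)) {X : Set (Sym2 ℕ)} (hX : X.Finite) :
    (mrk M₀ X : ℕ∞) = M₀.eRk X := by
  obtain ⟨I, hI⟩ := M₀.exists_isBasis' X
  have hIfin : I.Finite := hX.subset hI.subset
  have hmax : IsGreatest {n | ∃ J ⊆ X, M₀.Indep J ∧ J.ncard = n} I.ncard := by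
    refine ⟨⟨I, hI.subset, hI.indep, rfl⟩, ?_⟩
    rintro _ ⟨J, hJX, hJ, rfl⟩
    have := hJ.encard_le_eRk_of_subset hJX
    rw [← hI.encard_eq_eRk, ← (hX.subset hJX).cast_ncard_eq, ← hIfin.cast_ncard_eq] at this
    exact_mod_cast this
  rw [mrk, hmax.csSup_eq, hIfin.cast_ncard_eq, hI.encard_eq_eRk]

namespace GraphMatroidFamily

instance (M : GraphMatroidFamily) : M.M.Finitary := M.finitary

variable {M : GraphMatroidFamily} {C E I : Set (Sym2 ℕ)} {V T : Set ℕ} {w : ℕ}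

lemma subset_ground_iff : E ⊆ M.M.E ↔ ∀ e ∈ E, ¬ e.IsDiag := by
  rw [M.ground_eq]; rfl

lemma clique_subset_ground (V : Set ℕ) : clique V ⊆ M.M.E :=
  subset_ground_iff.2 fun _ he => he.1

lemma starEdges_subset_ground (hwT : w ∉ T) : starEdges w T ⊆ M.M.E :=
  subset_ground_iff.2 <| by
    rintro _ ⟨x, hx, rfl⟩ hd
    exact hwT (Sym2.mk_isDiag_iff.1 hd ▸ hx)

lemma rigidOn_iff (hV : V.Finite) (hE : E.Finite) :
    M.RigidOn V E ↔ M.M.eRk E = M.M.eRk (clique V) := by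
  rw [RigidOn, rk, rk, ← Nat.cast_inj (R := ℕ∞), mrk_eq_eRk _ hE,
    mrk_eq_eRk _ (clique_finite hV)]

lemma indep_image_iff (σ : Equiv.Perm ℕ) : M.M.Indep (Sym2.map σ '' I) ↔ M.M.Indep I := by
  refine ⟨fun h => ?_, M.invariant σ I⟩
  simpa [image_image, Sym2.map_map] using M.invariant σ⁻¹ _ h

lemma isCircuit_image (hC : M.M.IsCircuit C) (σ : Equiv.Perm ℕ) :
    M.M.IsCircuit (Sym2.map σ '' C) := by
  have hinj : Injective (Sym2.map σ) := Sym2.map.injective σ.injective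
  rw [Matroid.isCircuit_iff_dep_forall_sdiff_singleton_indep] at hC ⊢
  refine ⟨⟨(indep_image_iff σ).not.2 hC.1.not_indep, ?_⟩, ?_⟩
  · refine subset_ground_iff.2 ?_
    rintro _ ⟨e, he, rfl⟩
    rw [Sym2.isDiag_map σ.injective]
    exact subset_ground_iff.1 hC.1.subset_ground e he
  · rintro _ ⟨e, he, rfl⟩
    rw [← image_singleton, ← image_sdiff hinj, indep_image_iff]
    exact hC.2 e he

lemma isCircuit_iff : M.IsCircuit C ↔ M.M.IsCircuit C := by
  have key : M.M.IsCircuit C ↔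
      (¬ M.M.Indep C ∧ ∀ e ∈ C, ¬ e.IsDiag) ∧ ∀ e ∈ C, M.M.Indep (C \ {e}) := by
    rw [Matroid.isCircuit_iff_dep_forall_sdiff_singleton_indep, Matroid.dep_iff,
      subset_ground_iff]
  refine ⟨fun ⟨⟨_, hnd⟩, hdep, hmin⟩ => key.2 ⟨⟨hdep, hnd⟩, hmin⟩, fun hC => ?_⟩
  obtain ⟨⟨hdep, hnd⟩, hmin⟩ := key.1 hC
  exact ⟨⟨hC.finite, hnd⟩, hdep, hmin⟩

end GraphMatroidFamily

lemma exists_perm_eqOn {A : Set ℕ} (hA : A.Finite) {f : ℕ → ℕ} (hf : InjOn f A) :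
    ∃ σ : Equiv.Perm ℕ, EqOn σ f A := by
  classical
  have : Infinite (Aᶜ : Set ℕ) := hA.infinite_compl.to_subtype
  have : Infinite ((f '' A)ᶜ : Set ℕ) := (hA.image f).infinite_compl.to_subtype
  obtain ⟨e⟩ : Nonempty ((Aᶜ : Set ℕ) ≃ ((f '' A)ᶜ : Set ℕ)) := nonempty_equiv_of_countable
  obtain ⟨σ, hσ⟩ := (Equiv.Set.compl (Equiv.Set.imageOfInjOn f A hf)).symm e
  exact ⟨σ, fun a ha => hσ ⟨a, ha⟩⟩

lemma exists_perm_bijOn_mapsTo {c w : ℕ} {N R U X : Set ℕ} (hN : N.Finite) (hR : R.Finite)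
    (hcN : c ∉ N) (hcR : c ∉ R) (hNR : Disjoint N R) (hwU : w ∉ U) (hwX : w ∉ X)
    (hUX : Disjoint U X) (hNU : N.encard = U.encard) (hRX : R.encard ≤ X.encard) :
    ∃ σ : Equiv.Perm ℕ, σ c = w ∧ BijOn σ N U ∧ MapsTo σ R X := by
  classical
  obtain ⟨g, hg⟩ := hN.exists_bijOn_of_encard_eq hNU
  obtain ⟨h, hh, hhinj⟩ := hR.exists_injOn_of_encard_le hRX
  set φ := update (N.piecewise g h) c w
  have hφc : φ c = w := update_self ..
  have hφN : EqOn g φ N := fun x hx => by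
    simp [φ, update_of_ne (ne_of_mem_of_not_mem hx hcN), hx]
  have hφR : EqOn h φ R := fun x hx => by
    simp [φ, update_of_ne (ne_of_mem_of_not_mem hx hcR),
      hNR.notMem_of_mem_right hx]
  have hφ : InjOn φ (insert c (N ∪ R)) := by
    rw [injOn_insert (by simp [hcN, hcR]), injOn_union hNR]
    refine ⟨⟨hg.injOn.congr hφN, hhinj.congr hφR, fun x hx y hy hxy => ?_⟩, ?_⟩
    · rw [← hφN hx, ← hφR hy] at hxy
      exact hUX.ne_of_mem (hg.mapsTo hx) (hh hy) hxy
    · rintro ⟨x, hx | hx, hxw⟩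
      · exact hwU (by rw [← hφc, ← hxw, ← hφN hx]; exact hg.mapsTo hx)
      · exact hwX (by rw [← hφc, ← hxw, ← hφR hx]; exact hh hx)
  obtain ⟨σ, hσ⟩ := exists_perm_eqOn ((hN.union hR).insert c) hφ
  refine ⟨σ, (hσ (mem_insert c _)).trans hφc, hg.congr ?_, MapsTo.congr hh ?_⟩
  · exact hφN.trans (hσ.mono (subset_union_left.trans (subset_insert _ _))).symm
  · exact hφR.trans (hσ.mono (subset_union_right.trans (subset_insert _ _))).symm

namespace GraphMatroidFamily

variable {M : GraphMatroidFamily} {B C I : Set (Sym2 ℕ)} {U V W T : Set ℕ} {d t w : ℕ}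

lemma IsDimensionality.lt_deg (hd : M.IsDimensionality d) (hC : M.M.IsCircuit C) {v : ℕ}
    (hv : v ∈ eSupp C) : d < deg C v := by
  have h1 := one_le_minDeg hC.finite ⟨v, hv⟩
  have h2 : d ≤ minDeg C - 1 := hd.2 ⟨C, isCircuit_iff.2 hC, by omega⟩
  have h3 : minDeg C ≤ deg C v := Nat.sInf_le ⟨v, hv, rfl⟩
  omega

lemma IsDimensionality.indep_union_starEdges (hd : M.IsDimensionality d) (hI : M.M.Indep I)
    (hw : w ∉ eSupp I) (hwT : w ∉ T) (hT : T.encard ≤ d) : M.M.Indep (I ∪ starEdges w T) := by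
  by_contra hdep
  rw [Matroid.not_indep_iff (union_subset hI.subset_ground (starEdges_subset_ground hwT))] at hdep
  obtain ⟨C, hCI, hC⟩ := hdep.exists_isCircuit_subset
  by_cases hwC : w ∈ eSupp C
  · have hTfin : T.Finite := finite_of_encard_le_coe hT
    have hnbrs : nbrs C w ⊆ T := fun x hx => by
      rcases hCI hx with h | ⟨y, hy, hyx⟩
      · exact absurd ⟨_, h, Sym2.mem_mk_left w x⟩ hw
      · exact starEdges_injective w hyx ▸ hy
    have hdeg := hd.lt_deg hC hwC
    have hTd : (T.ncard : ℕ∞) ≤ d := hTfin.cast_ncard_eq ▸ hT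
    rw [deg_eq_ncard_nbrs] at hdeg
    have := ncard_le_ncard hnbrs hTfin
    norm_cast at hTd
    omega
  · refine hC.not_indep (hI.subset fun e he => (hCI he).resolve_right ?_)
    rintro ⟨x, -, rfl⟩
    exact hwC ⟨_, he, Sym2.mem_mk_left w x⟩

lemma IsThreshold.exists_isCircuit (ht : M.IsThreshold d t) :
    ∃ C c, M.M.IsCircuit C ∧ c ∈ eSupp C ∧ (nbrs C c).encard = d + 1 ∧
      (eSupp C).encard = t + 1 := by
  obtain ⟨C, hC, hmin, hcard⟩ := ht.1
  have hCV : (eSupp C).Finite := eSupp_finite hC.1.1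
  obtain ⟨c, hc, hdeg⟩ :=
    exists_deg_eq_minDeg (nonempty_of_ncard_ne_zero (s := eSupp C) (by omega))
  have hN : (nbrs C c).Finite := hCV.subset (nbrs_subset_eSupp C c)
  refine ⟨C, c, isCircuit_iff.1 hC, hc, ?_, ?_⟩
  · rw [← hN.cast_ncard_eq, ← deg_eq_ncard_nbrs, hdeg, hmin]
    push_cast; rfl
  · rw [← hCV.cast_ncard_eq, hcard]
    push_cast; rfl

lemma IsThreshold.lt (ht : M.IsThreshold d t) : d < t := by
  obtain ⟨C, c, hC, hc, hN, hCV⟩ := ht.exists_isCircuit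
  have := encard_le_encard (insert_subset hc (nbrs_subset_eSupp C c))
  rw [encard_insert_of_notMem ((isCircuit_iff.2 hC).1.notMem_nbrs c), hN, hCV] at this
  have : d + 1 + 1 ≤ t + 1 := by exact_mod_cast this
  omega


lemma IsThreshold.exists_isCircuit_starEdges_subset (ht : M.IsThreshold d t)
    (htV : t ≤ V.encard) (hUV : U ⊆ V) (hU : U.encard = d + 1) (hw : w ∉ V) :
    ∃ C, M.M.IsCircuit C ∧ starEdges w U ⊆ C ∧ C ⊆ clique V ∪ starEdges w U := by
  obtain ⟨C, c, hC, hc, hN, hCV⟩ := ht.exists_isCircuit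
  have hCg : IsGraph C := (isCircuit_iff.2 hC).1
  have hCfin : (eSupp C).Finite := eSupp_finite hCg.1
  set N := nbrs C c
  set R := eSupp C \ insert c N
  have hNC : N ⊆ eSupp C := nbrs_subset_eSupp C c
  have hcN : c ∉ N := hCg.notMem_nbrs c
  have hR : R.encard ≤ (V \ U).encard := by
    have hsplitC := encard_sdiff_add_encard_of_subset (insert_subset hc hNC)
    have hsplitV := encard_sdiff_add_encard_of_subset hUV
    rw [encard_insert_of_notMem hcN, hN, hCV] at hsplitC
    rw [hU] at hsplitV
    refine (ENat.add_le_add_iff_right (k := d + 1 + 1) (by simp)).1 ?_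
    rw [hsplitC, ← add_assoc, hsplitV]
    gcongr
  -- `σ` places `c` at `w`, its `d + 1` neighbours onto `U` and the other `t - d - 1` vertices
  -- of `C` into `V \ U`.
  obtain ⟨σ, hσc, hσN, hσR⟩ := exists_perm_bijOn_mapsTo (hCfin.subset hNC) hCfin.sdiff
    hcN (fun h => h.2 (mem_insert c N)) (disjoint_sdiff_right.mono_left (subset_insert c N))
    (fun h => hw (hUV h)) (fun h => hw h.1) disjoint_sdiff_right (hN.trans hU.symm) hR
  have hσV : MapsTo σ (eSupp C \ {c}) V := by
    rintro x ⟨hx, hxc⟩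
    by_cases hxN : x ∈ N
    · exact hUV (hσN.mapsTo hxN)
    · exact (hσR ⟨hx, by rintro (h | h) <;> contradiction⟩).1
  have hσC : Sym2.map σ '' C ⊆ clique V ∪ starEdges w U := by
    refine (image_mono (hCg.subset_clique_union_starEdges c)).trans ?_
    rw [image_union]
    refine union_subset_union (image_clique_subset σ.injective hσV) ?_
    rintro _ ⟨_, ⟨x, hx, rfl⟩, rfl⟩
    rw [Sym2.map_mk, hσc]
    exact ⟨σ x, hσN.mapsTo hx, rfl⟩
  refine ⟨Sym2.map σ '' C, isCircuit_image hC σ, ?_, hσC⟩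
  rintro _ ⟨u, hu, rfl⟩
  obtain ⟨x, hx, rfl⟩ := hσN.surjOn hu
  exact ⟨s(c, x), hx, by rw [Sym2.map_mk, hσc]⟩

lemma IsThreshold.mem_closure (ht : M.IsThreshold d t) (htV : t ≤ V.encard) (hUV : U ⊆ V)
    (hU : U.encard = d + 1) (hw : w ∉ V) {u : ℕ} (hu : u ∈ U) :
    s(w, u) ∈ M.M.closure (clique V ∪ starEdges w (U \ {u})) := by
  obtain ⟨C, hC, hstar, hCsub⟩ := ht.exists_isCircuit_starEdges_subset htV hUV hU hw
  refine M.M.closure_subset_closure ?_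
    (hC.mem_closure_sdiff_singleton_of_mem (hstar ⟨u, hu, rfl⟩))
  rintro e ⟨he, hne⟩
  rcases hCsub he with h | ⟨y, hy, rfl⟩
  · exact Or.inl h
  · exact Or.inr ⟨y, ⟨hy, fun hyu => hne (by rw [mem_singleton_iff.1 hyu]; rfl)⟩, rfl⟩

lemma IsThreshold.eRk_clique_insert_le (ht : M.IsThreshold d t) (htV : t ≤ V.encard)
    (hw : w ∉ V) : M.M.eRk (clique (insert w V)) ≤ M.M.eRk (clique V) + d := by
  obtain ⟨D, hDV, hD⟩ := exists_subset_encard_eq ((Nat.cast_le.2 ht.lt.le).trans htV)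
  have hwD : w ∉ D := fun h => hw (hDV h)
  have hspan : clique (insert w V) ⊆ M.M.closure (clique V ∪ starEdges w D) := by
    intro e he
    rcases clique_insert_subset he with he | ⟨x, hx, rfl⟩
    · exact M.M.mem_closure_of_mem' (Or.inl he) (clique_subset_ground V he)
    by_cases hxD : x ∈ D
    · exact M.M.mem_closure_of_mem' (Or.inr ⟨x, hxD, rfl⟩)
        (starEdges_subset_ground hwD ⟨x, hxD, rfl⟩)
    · have := ht.mem_closure htV (insert_subset hx hDV)
        (by rw [encard_insert_of_notMem hxD, hD]) hw (mem_insert x D)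
      rwa [insert_sdiff_self_of_notMem hxD] at this
  calc M.M.eRk (clique (insert w V))
      ≤ M.M.eRk (M.M.closure (clique V ∪ starEdges w D)) := M.M.eRk_mono hspan
    _ = M.M.eRk (clique V ∪ starEdges w D) := M.M.eRk_closure_eq _
    _ ≤ M.M.eRk (clique V) + M.M.eRk (starEdges w D) := M.M.eRk_union_le_eRk_add_eRk _ _
    _ ≤ M.M.eRk (clique V) + d := by
      gcongr
      exact (M.M.eRk_le_encard _).trans (by rw [encard_starEdges, hD])

lemma isBasis_union_starEdges (hd : M.IsDimensionality d) (ht : M.IsThreshold d t)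
    (hV : V.Finite) (htV : t ≤ V.encard) (hB : M.M.IsBasis B (clique V)) (hw : w ∉ V)
    (hTV : T ⊆ V) (hT : T.encard = d) :
    M.M.IsBasis (B ∪ starEdges w T) (clique (insert w V)) := by
  have hBV : B ⊆ clique V := hB.subset
  have hwT : w ∉ T := fun h => hw (hTV h)
  have hind := hd.indep_union_starEdges hB.indep
    (fun h => hw (eSupp_subset_of_subset_clique hBV h)) hwT hT.le
  have hdisj : Disjoint B (starEdges w T) := by
    rw [disjoint_left]
    rintro e he ⟨x, -, rfl⟩
    exact hw (mk_mem_clique.1 (hBV he)).2.1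
  refine hind.isBasis_of_eRk_ge
    (((clique_finite hV).subset hBV).union ((finite_of_encard_eq_coe hT).image _))
    (union_subset (hBV.trans (clique_mono (subset_insert w V)))
      (starEdges_subset_clique (hTV.trans (subset_insert w V)) (mem_insert w V) hwT))
    ?_ (clique_subset_ground _)
  rw [hind.eRk_eq_encard, encard_union_eq hdisj, encard_starEdges, hT, hB.encard_eq_eRk]
  exact ht.eRk_clique_insert_le htV hw

lemma isBasis_union_biUnion_starEdges (hd : M.IsDimensionality d) (ht : M.IsThreshold d t)
    (hW : W.Finite) (htW : t ≤ W.encard) (hB : M.M.IsBasis B (clique W)) {T : ℕ → Set ℕ}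
    (hTW : ∀ v, T v ⊆ W) (hT : ∀ v, (T v).encard = d) (hU : U.Finite) (hUW : Disjoint U W) :
    M.M.IsBasis (B ∪ ⋃ v ∈ U, starEdges v (T v)) (clique (W ∪ U)) := by
  induction U, hU using Set.Finite.induction_on with
  | empty => simpa using hB
  | @insert a U haU hU ih =>
    have hstep := isBasis_union_starEdges hd ht (hW.union hU)
      (htW.trans (encard_le_encard subset_union_left))
      (ih (hUW.mono_left (subset_insert a U)))
      (by rintro (h | h); exacts [hUW.notMem_of_mem_right h (mem_insert a U), haU h])
      ((hTW a).trans subset_union_left) (hT a)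
    rwa [biUnion_insert, union_insert, union_comm (starEdges a (T a)), ← union_assoc]

end GraphMatroidFamily

lemma exists_pairwise_disjoint_subsets {ι : Type*} [Fintype ι] {V : Set ℕ} (n : ι → ℕ)
    (h : ((∑ i, n i : ℕ) : ℕ∞) ≤ V.encard) :
    ∃ W : ι → Set ℕ, Pairwise (Disjoint on W) ∧ ∀ i, W i ⊆ V ∧ (W i).encard = n i := by
  obtain ⟨f, hfV, hf⟩ := (finite_univ (α := Σ i, Fin (n i))).exists_injOn_of_encard_le (t := V)
    (by simpa [encard_univ, ENat.card_eq_coe_fintype_card] using h)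
  refine ⟨fun i => f '' range (Sigma.mk i), fun i j hij => ?_, fun i => ⟨?_, ?_⟩⟩
  · rw [Function.onFun, disjoint_iff_forall_ne]
    rintro _ ⟨_, ⟨a, rfl⟩, rfl⟩ _ ⟨_, ⟨b, rfl⟩, rfl⟩ hab
    exact hij (congrArg Sigma.fst (hf (mem_univ _) (mem_univ _) hab))
  · exact image_subset_iff.2 fun x _ => hfV (mem_univ x)
  · rw [(hf.mono (subset_univ _)).encard_image, ← image_univ,
      sigma_mk_injective.encard_image, encard_univ, ENat.card_eq_coe_fintype_card,
      Fintype.card_fin]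

lemma exists_crossing_free_leaves {ι : Type*} [LinearOrder ι] {W : ι → Set ℕ}
    (hW : Pairwise (Disjoint on W)) {A : ι → Bool → Set ℕ} (hAW : ∀ i b, A i b ⊆ W i)
    (hA : ∀ i, Disjoint (A i false) (A i true)) :
    ∃ T : ι → ℕ → Set ℕ, (∀ i v, ∃ b, T i v = A i b) ∧
      ∀ i j u v, i ≠ j → u ∈ W i → v ∈ W j → u ∈ T i v → v ∉ T j u := by
  classical
  set β : ℕ → Bool := fun v => decide (∃ l, v ∈ A l true)
  have hβ : ∀ i b u, u ∈ A i b → β u = b := by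
    intro i b u hu
    cases b
    · refine decide_eq_false fun ⟨l, hl⟩ => ?_
      rcases eq_or_ne l i with rfl | hli
      · exact (hA l).notMem_of_mem_left hu hl
      · exact (hW hli).notMem_of_mem_left (hAW l true hl) (hAW i false hu)
    · exact decide_eq_true ⟨i, hu⟩
  -- Towards later blocks `v` uses the half `A i (β v)`, towards earlier ones the other half,
  -- so an edge `uv` claimed from both sides would force `β u = β v = !β u`.
  set T : ι → ℕ → Set ℕ := fun i v => A i (β v ^^ decide (∃ j < i, v ∈ W j))
  have key : ∀ i j u v, i < j → u ∈ W i → v ∈ W j → u ∈ T i v → v ∉ T j u := by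
    intro i j u v hij hu hv huv hvu
    have hvi : decide (∃ l < i, v ∈ W l) = false :=
      decide_eq_false fun ⟨l, hl, hvl⟩ => (hW (hl.trans hij).ne).notMem_of_mem_left hvl hv
    have huj : decide (∃ l < j, u ∈ W l) = true := decide_eq_true ⟨i, hij, hu⟩
    simp only [T, hvi, huj, Bool.xor_false, Bool.xor_true] at huv hvu
    have h1 := hβ _ _ _ huv
    have h2 := hβ _ _ _ hvu
    rw [h1] at h2
    exact Bool.not_ne_self _ h2.symm
  refine ⟨T, fun i v => ⟨_, rfl⟩, fun i j u v hij hu hv huv hvu => ?_⟩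
  rcases hij.lt_or_gt with h | h
  · exact key i j u v h hu hv huv hvu
  · exact key j i v u h hv hu hvu huv

lemma pairwise_disjoint_clique_union_starEdges {ι : Type*} {W : ι → Set ℕ}
    (hW : Pairwise (Disjoint on W)) {T : ι → ℕ → Set ℕ} (hTW : ∀ i v, T i v ⊆ W i)
    (hT : ∀ i j u v, i ≠ j → u ∈ W i → v ∈ W j → u ∈ T i v → v ∉ T j u) (V : Set ℕ) :
    Pairwise (Disjoint on fun i => clique (W i) ∪ ⋃ v ∈ V \ W i, starEdges v (T i v)) := by
  have hform : ∀ i e, e ∈ clique (W i) ∪ ⋃ v ∈ V \ W i, starEdges v (T i v) →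
      ∃ x ∈ W i, ∃ v, e = s(x, v) ∧ (v ∈ W i ∨ x ∈ T i v) := by
    rintro i e (he | he)
    · induction e with
      | _ a b => exact ⟨a, (mk_mem_clique.1 he).2.1, b, rfl, Or.inl (mk_mem_clique.1 he).2.2⟩
    · obtain ⟨v, -, x, hx, rfl⟩ := mem_iUnion₂.1 he
      exact ⟨x, hTW i v hx, v, Sym2.eq_swap, Or.inr hx⟩
  intro i j hij
  refine disjoint_left.2 fun e hei hej => ?_
  obtain ⟨x, hx, v, rfl, hxv⟩ := hform i _ hei
  obtain ⟨y, hy, u, hyu, hyu'⟩ := hform j _ hej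
  rcases Sym2.eq_iff.1 hyu with ⟨rfl, rfl⟩ | ⟨rfl, rfl⟩
  · exact (hW hij).notMem_of_mem_left hx hy
  · exact hT i j _ _ hij hx hy (hxv.resolve_left ((hW hij).symm.notMem_of_mem_left hy))
      (hyu'.resolve_left ((hW hij).notMem_of_mem_left hx))

lemma ENat.eq_of_le_of_sum_eq {ι : Type*} {s : Finset ι} {f g : ι → ℕ∞}
    (hfg : ∀ i ∈ s, f i ≤ g i) (hsum : ∑ i ∈ s, f i = ∑ i ∈ s, g i)
    (htop : ∑ i ∈ s, g i ≠ ⊤) : ∀ i ∈ s, f i = g i := by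
  have hg : ∀ i ∈ s, g i ≠ ⊤ := ENat.sum_ne_top.1 htop
  have hf : ∀ i ∈ s, f i ≠ ⊤ := fun i hi => ne_top_of_le_ne_top (hg i hi) (hfg i hi)
  have hsum' := congrArg ENat.toNat hsum
  rw [ENat.toNat_sum hf, ENat.toNat_sum hg,
    Finset.sum_eq_sum_iff_of_le fun i hi => ENat.toNat_le_toNat (hfg i hi) (hg i hi)] at hsum'
  intro i hi
  rw [← ENat.natCast_toNat (hf i hi), ← ENat.natCast_toNat (hg i hi), hsum' i hi]

namespace GraphMatroidFamily

lemma exists_pairwise_disjoint_isBasis_clique {ι : Type*} [Fintype ι] [LinearOrder ι]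
    {Ms : ι → GraphMatroidFamily} {ds ts : ι → ℕ} (hd : ∀ i, (Ms i).IsDimensionality (ds i))
    (ht : ∀ i, (Ms i).IsThreshold (ds i) (ts i)) {V : Set ℕ} (hV : V.Finite)
    (hcard : ((∑ i, max (ts i) (2 * ds i) : ℕ) : ℕ∞) ≤ V.encard) :
    ∃ P : ι → Set (Sym2 ℕ), Pairwise (Disjoint on P) ∧ ∀ i, (Ms i).M.IsBasis (P i) (clique V) := by
  obtain ⟨W, hW, hWV⟩ := exists_pairwise_disjoint_subsets _ hcard
  have hhalves : ∀ i, ∃ A : Bool → Set ℕ,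
      Pairwise (Disjoint on A) ∧ ∀ b, A b ⊆ W i ∧ (A b).encard = ds i := fun i =>
    exists_pairwise_disjoint_subsets (fun _ => ds i) <| by
      rw [(hWV i).2, Fintype.sum_bool]
      exact_mod_cast (by omega : ds i + ds i ≤ max (ts i) (2 * ds i))
  choose A hAdisj hA using hhalves
  obtain ⟨T, hTA, hT⟩ := exists_crossing_free_leaves hW (fun i b => (hA i b).1)
    (fun i => hAdisj i Bool.false_ne_true)
  have hTW : ∀ i v, T i v ⊆ W i := fun i v => by
    obtain ⟨b, hb⟩ := hTA i v
    exact hb ▸ (hA i b).1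
  have hTd : ∀ i v, (T i v).encard = ds i := fun i v => by
    obtain ⟨b, hb⟩ := hTA i v
    exact hb ▸ (hA i b).2
  choose B hB using fun i => (Ms i).M.exists_isBasis (clique (W i)) (clique_subset_ground _)
  refine ⟨fun i => B i ∪ ⋃ v ∈ V \ W i, starEdges v (T i v), fun i j hij => ?_, fun i => ?_⟩
  · exact (pairwise_disjoint_clique_union_starEdges hW hTW hT V hij).mono
      (union_subset_union_left _ (hB i).subset) (union_subset_union_left _ (hB j).subset)
  · have := isBasis_union_biUnion_starEdges (hd i) (ht i) (hV.subset (hWV i).1)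
      (by rw [(hWV i).2]; exact_mod_cast le_max_left _ _) (hB i) (hTW i) (hTd i) hV.sdiff
      disjoint_sdiff_left
    rwa [union_sdiff_cancel (hWV i).1] at this

variable {M : GraphMatroidFamily} {k : ℕ} {Ms : Fin k → GraphMatroidFamily}

lemma IsUnionOf.eRk_le_sum (hU : M.IsUnionOf Ms) (X : Set (Sym2 ℕ)) :
    M.M.eRk X ≤ ∑ i, (Ms i).M.eRk X := by
  refine Matroid.eRk_le_iff.2 fun I hIX hI => ?_
  obtain ⟨Is, hIs, rfl⟩ := (hU I).1 hI
  calc (⋃ i, Is i).encard ≤ ∑ i, (Is i).encard := encard_iUnion_le_of_fintype Is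
    _ ≤ ∑ i, (Ms i).M.eRk X := Finset.sum_le_sum fun i _ =>
      Matroid.Indep.encard_le_eRk_of_subset (hIs i) ((subset_iUnion Is i).trans hIX)

lemma IsUnionOf.sum_encard_le_eRk (hU : M.IsUnionOf Ms) {I : Fin k → Set (Sym2 ℕ)}
    (hI : ∀ i, (Ms i).M.Indep (I i)) (hdisj : Pairwise (Disjoint on I)) {X : Set (Sym2 ℕ)}
    (hIX : ∀ i, I i ⊆ X) : ∑ i, (I i).encard ≤ M.M.eRk X := by
  rw [← finsum_eq_sum_of_fintype, ← encard_iUnion_of_finite hdisj]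
  exact Matroid.Indep.encard_le_eRk_of_subset ((hU _).2 ⟨I, hI, rfl⟩) (iUnion_subset hIX)

lemma IsUnionOf.exists_disjoint_indep (hU : M.IsUnionOf Ms) {I : Set (Sym2 ℕ)}
    (hI : M.M.Indep I) : ∃ J : Fin k → Set (Sym2 ℕ),
      (∀ i, (Ms i).M.Indep (J i)) ∧ Pairwise (Disjoint on J) ∧ ⋃ i, J i = I := by
  obtain ⟨Is, hIs, rfl⟩ := (hU I).1 hI
  exact ⟨disjointed Is, fun i => Matroid.Indep.subset (hIs i) (disjointed_subset Is i),
    disjoint_disjointed Is, iUnion_disjointed⟩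

lemma IsUnionOf.eRk_clique_eq_sum (hU : M.IsUnionOf Ms) {ds ts : Fin k → ℕ}
    (hd : ∀ i, (Ms i).IsDimensionality (ds i)) (ht : ∀ i, (Ms i).IsThreshold (ds i) (ts i))
    {V : Set ℕ} (hV : V.Finite) (hcard : ((∑ i, max (ts i) (2 * ds i) : ℕ) : ℕ∞) ≤ V.encard) :
    M.M.eRk (clique V) = ∑ i, (Ms i).M.eRk (clique V) := by
  obtain ⟨P, hPdisj, hP⟩ := exists_pairwise_disjoint_isBasis_clique hd ht hV hcard
  refine le_antisymm (hU.eRk_le_sum _) ?_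
  calc ∑ i, (Ms i).M.eRk (clique V) = ∑ i, (P i).encard := by
        simp_rw [(hP _).encard_eq_eRk]
    _ ≤ M.M.eRk (clique V) :=
        hU.sum_encard_le_eRk (fun i => (hP i).indep) hPdisj fun i => (hP i).subset

theorem IsUnionOf.rigid_of_rigidOn (hU : M.IsUnionOf Ms) {G : Set (Sym2 ℕ)} (hG : IsGraph G)
    {Gs : Fin k → Set (Sym2 ℕ)} (hGs : ∀ i, Gs i ⊆ G) (hdisj : Pairwise (Disjoint on Gs))
    (hrig : ∀ i, (Ms i).RigidOn (eSupp G) (Gs i)) : M.Rigid G := by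
  have hV := eSupp_finite hG.1
  choose B hB using fun i =>
    (Ms i).M.exists_isBasis (Gs i) (subset_ground_iff.2 fun e he => hG.2 e (hGs i he))
  have hsum : ∑ i, (Ms i).M.eRk (clique (eSupp G)) ≤ M.M.eRk G :=
    calc ∑ i, (Ms i).M.eRk (clique (eSupp G)) = ∑ i, (B i).encard :=
          Finset.sum_congr rfl fun i _ => by
            rw [(hB i).encard_eq_eRk, (rigidOn_iff hV (hG.1.subset (hGs i))).1 (hrig i)]
      _ ≤ M.M.eRk G := hU.sum_encard_le_eRk (fun i => (hB i).indep)
          (fun i j hij => (hdisj hij).mono (hB i).subset (hB j).subset)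
          fun i => (hB i).subset.trans (hGs i)
  exact (rigidOn_iff hV hG.1).2
    (le_antisymm (M.M.eRk_mono hG.subset_clique) ((hU.eRk_le_sum _).trans hsum))

theorem IsUnionOf.exists_rigidOn_of_rigid (hU : M.IsUnionOf Ms) {ds ts : Fin k → ℕ}
    (hd : ∀ i, (Ms i).IsDimensionality (ds i)) (ht : ∀ i, (Ms i).IsThreshold (ds i) (ts i))
    {G : Set (Sym2 ℕ)} (hG : IsGraph G) (hrig : M.Rigid G)
    (hcard : ∑ i, max (ts i) (2 * ds i) ≤ (eSupp G).ncard) :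
    ∃ Gs : Fin k → Set (Sym2 ℕ), (∀ i, Gs i ⊆ G) ∧ Pairwise (Disjoint on Gs) ∧
      ∀ i, (Ms i).RigidOn (eSupp G) (Gs i) := by
  have hV := eSupp_finite hG.1
  have hadd := hU.eRk_clique_eq_sum hd ht hV (by rw [← hV.cast_ncard_eq]; exact_mod_cast hcard)
  obtain ⟨B, hB⟩ := M.M.exists_isBasis G (subset_ground_iff.2 hG.2)
  obtain ⟨J, hJ, hJdisj, hJB⟩ := hU.exists_disjoint_indep hB.indep
  have hJG : ∀ i, J i ⊆ G := fun i => (subset_iUnion J i).trans (hJB ▸ hB.subset)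
  have hsum : ∑ i, (J i).encard = ∑ i, (Ms i).M.eRk (clique (eSupp G)) := by
    rw [← finsum_eq_sum_of_fintype, ← encard_iUnion_of_finite hJdisj, hJB, hB.encard_eq_eRk,
      (rigidOn_iff hV hG.1).1 hrig, hadd]
  have htop : ∑ i, (Ms i).M.eRk (clique (eSupp G)) ≠ ⊤ := by
    rw [← hadd]
    exact ne_top_of_le_ne_top (clique_finite hV).encard_lt_top.ne (M.M.eRk_le_encard _)
  refine ⟨J, hJG, hJdisj, fun i => (rigidOn_iff hV (hG.1.subset (hJG i))).2 ?_⟩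
  rw [(hJ i).eRk_eq_encard]
  refine ENat.eq_of_le_of_sum_eq (fun i _ => ?_) hsum htop i (Finset.mem_univ i)
  exact (hJ i).encard_le_eRk_of_subset ((hJG i).trans hG.subset_clique)

end GraphMatroidFamily

theorem union_rigid_packing_general {k : ℕ} (M : GraphMatroidFamily)
    (Ms : Fin k → GraphMatroidFamily) (ds ts : Fin k → ℕ)
    (hU : M.IsUnionOf Ms)
    (hd : ∀ i, (Ms i).IsDimensionality (ds i))
    (ht : ∀ i, (Ms i).IsThreshold (ds i) (ts i)) :
    (∀ G : Set (Sym2 ℕ), IsGraph G →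
      (∃ Gs : Fin k → Set (Sym2 ℕ), (∀ i, Gs i ⊆ G) ∧
        (∀ i j, i ≠ j → Disjoint (Gs i) (Gs j)) ∧
        (∀ i, (Ms i).RigidOn (eSupp G) (Gs i))) →
      M.Rigid G) ∧
    (∀ G : Set (Sym2 ℕ), IsGraph G → M.Rigid G →
      (∑ i, max (ts i) (2 * ds i)) ≤ (eSupp G).ncard →
      ∃ Gs : Fin k → Set (Sym2 ℕ), (∀ i, Gs i ⊆ G) ∧
        (∀ i j, i ≠ j → Disjoint (Gs i) (Gs j)) ∧
        (∀ i, (Ms i).RigidOn (eSupp G) (Gs i))) := by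
  refine ⟨fun G hG ⟨Gs, hGs, hdisj, hrig⟩ => hU.rigid_of_rigidOn hG hGs
    (fun i j hij => hdisj i j hij) hrig, fun G hG hrig hcard => ?_⟩
  obtain ⟨Gs, hGs, hdisj, hrig'⟩ := hU.exists_rigidOn_of_rigid hd ht hG hrig hcard
  exact ⟨Gs, hGs, fun i j hij => hdisj hij, hrig'⟩

/-- Let `M` be the union of nontrivial graph matroid families
`M₁, …, M_k` with dimensionalities `d_i` and thresholds `t_i`, and put
`t = Σ_i max(t_i, 2 d_i)`.  (a) If a graph `G` contains pairwise edge-disjoint spanning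
subgraphs `G₁, …, G_k` with `G_i` being `M_i`-rigid, then `G` is `M`-rigid.
(b) Conversely, if `G` is `M`-rigid and has at least `t` vertices, then `G` contains
such spanning subgraphs. -/
theorem union_rigid_packing {k : ℕ} (M : GraphMatroidFamily)
    (Ms : Fin k → GraphMatroidFamily) (ds ts : Fin k → ℕ)
    (hU : M.IsUnionOf Ms) (hnt : ∀ i, ¬ (Ms i).Trivial)
    (hd : ∀ i, (Ms i).IsDimensionality (ds i))
    (ht : ∀ i, (Ms i).IsThreshold (ds i) (ts i)) :
    (∀ G : Set (Sym2 ℕ), IsGraph G →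
      (∃ Gs : Fin k → Set (Sym2 ℕ), (∀ i, Gs i ⊆ G) ∧
        (∀ i j, i ≠ j → Disjoint (Gs i) (Gs j)) ∧
        (∀ i, (Ms i).RigidOn (eSupp G) (Gs i))) →
      M.Rigid G) ∧
    (∀ G : Set (Sym2 ℕ), IsGraph G → M.Rigid G →
      (∑ i, max (ts i) (2 * ds i)) ≤ (eSupp G).ncard →
      ∃ Gs : Fin k → Set (Sym2 ℕ), (∀ i, Gs i ⊆ G) ∧
        (∀ i j, i ≠ j → Disjoint (Gs i) (Gs j)) ∧
        (∀ i, (Ms i).RigidOn (eSupp G) (Gs i))) :=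
  union_rigid_packing_general M Ms ds ts hU hd ht
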